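/- Consider E(x) = ‖x‖₁ - ‖x‖₂ + (1/2)(x₁ + x₂ - 1)² on ℝ². The points (1, 0) and (0, 1) are global minimizers of E with E = 0, and x* = (1/(2√2), 1/(2√2)) is a stationary point of E (it satisfies the first-order optimality condition) that is not a global minimizer. -/

import Mathlib

/-! Since `‖x‖₂ ≤ ‖x‖₁`, `E ≥ 0`, so every zero of `E` is a global minimizer. On the diagonal
`E (s, s) = (2 - √2) |s| + (2s - 1)² / 2`, which never vanishes. -/

/-- The objective of Example 3 in the paper, on ℝ². -/
noncomputable def Eobj (z : ℝ × ℝ) : ℝ :=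
  |z.1| + |z.2| - Real.sqrt (z.1 ^ 2 + z.2 ^ 2) + 1 / 2 * (z.1 + z.2 - 1) ^ 2

open Real

lemma sqrt_sq_add_sq_le_abs_add_abs (a b : ℝ) : √(a ^ 2 + b ^ 2) ≤ |a| + |b| := by
  rw [sqrt_le_left (by positivity)]
  nlinarith [sq_abs a, sq_abs b, abs_nonneg a, abs_nonneg b]

lemma sqrt_sq_add_sq_self (s : ℝ) : √(s ^ 2 + s ^ 2) = √2 * |s| := by
  rw [← two_mul, sqrt_mul zero_le_two, sqrt_sq_eq_abs]

lemma Eobj_nonneg (z : ℝ × ℝ) : 0 ≤ Eobj z := by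
  have := sqrt_sq_add_sq_le_abs_add_abs z.1 z.2
  unfold Eobj
  nlinarith [sq_nonneg (z.1 + z.2 - 1)]

lemma Eobj_one_zero : Eobj (1, 0) = 0 := by
  simp [Eobj]

lemma Eobj_zero_one : Eobj (0, 1) = 0 := by
  simp [Eobj]

lemma Eobj_diag (s : ℝ) : Eobj (s, s) = (2 - √2) * |s| + 1 / 2 * (2 * s - 1) ^ 2 := by
  simp only [Eobj, sqrt_sq_add_sq_self]
  ring

lemma Eobj_diag_pos (s : ℝ) : 0 < Eobj (s, s) := by
  have hsqrt2 : √2 < 2 := (sqrt_lt' two_pos).2 (by norm_num)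
  rw [Eobj_diag]
  rcases eq_or_ne s (1 / 2) with rfl | hs
  · norm_num [abs_of_pos]
  · have : 0 < (2 * s - 1) ^ 2 := sq_pos_of_ne_zero (sub_ne_zero.2 fun h => hs (by linarith))
    nlinarith [abs_nonneg s]

theorem stmt19 :
    (∀ z, Eobj (1, 0) ≤ Eobj z) ∧ Eobj (1, 0) = 0 ∧
      (∀ z, Eobj (0, 1) ≤ Eobj z) ∧ Eobj (0, 1) = 0 ∧
      -- first-order stationarity of (s, s): for each coordinate,
      -- sign(s) - s/‖(s,s)‖₂ + ∇l(s,s) = 0, and (s,s) is not a global minimizer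
      (let s : ℝ := 1 / (2 * Real.sqrt 2);
        (1 - s / Real.sqrt (s ^ 2 + s ^ 2) + (s + s - 1) = 0) ∧
        ¬ ∀ z, Eobj (s, s) ≤ Eobj z) := by
  refine ⟨fun z => Eobj_one_zero.le.trans (Eobj_nonneg z), Eobj_one_zero,
    fun z => Eobj_zero_one.le.trans (Eobj_nonneg z), Eobj_zero_one, ?_⟩
  dsimp only
  refine ⟨?_, fun hmin => (hmin (1, 0)).not_gt (Eobj_one_zero.trans_lt (Eobj_diag_pos _))⟩
  rw [sqrt_sq_add_sq_self, abs_of_pos (by positivity)]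
  field_simp
  ring
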